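/- Let X ⊆ S^{Z^2} be a two-dimensional SFT with the R property whose projective subdynamics PS(X) is countable, and let x ∈ X have a period (σ^n(x) = x for some n ∈ Z^2, n ≠ (0,0)). Then there do not exist y, z ∈ X with x > y > z in the subpattern preorder. -/

import Mathlib

/-- Translation of a two-dimensional configuration. -/
def shift2 {S : Type*} (n : ℤ × ℤ) (x : ℤ × ℤ → S) : ℤ × ℤ → S := fun m => x (n + m)

/-- The pattern with domain `D` and content `p` occurs in `x`. -/
def occurs2 {S : Type*} (D : Finset (ℤ × ℤ)) (p : ℤ × ℤ → S) (x : ℤ × ℤ → S) : Prop :=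
  ∃ n : ℤ × ℤ, ∀ m ∈ D, x (n + m) = p m

/-- A two-dimensional subshift of finite type: the configurations in which no pattern from a
fixed finite set of forbidden finite patterns occurs. -/
def IsSFT2 {S : Type*} (X : Set (ℤ × ℤ → S)) : Prop :=
  ∃ F : Set (Finset (ℤ × ℤ) × (ℤ × ℤ → S)), F.Finite ∧
    X = {x | ∀ P ∈ F, ¬ occurs2 P.1 P.2 x}

/-- `x ≤ y` in the subpattern preorder: every finite pattern occurring in `x` occurs in `y`. -/
def patLE2 {S : Type*} (x y : ℤ × ℤ → S) : Prop :=
  ∀ (D : Finset (ℤ × ℤ)) (n : ℤ × ℤ), ∃ n' : ℤ × ℤ, ∀ m ∈ D, y (n' + m) = x (n + m)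

/-- `x < y` in the subpattern preorder. -/
def patLT2 {S : Type*} (x y : ℤ × ℤ → S) : Prop := patLE2 x y ∧ ¬ patLE2 y x

/-- The `i`-th row of a two-dimensional configuration. -/
def row {S : Type*} (x : ℤ × ℤ → S) (i : ℤ) : ℤ → S := fun j => x (j, i)

/-- The (horizontal) projective subdynamics of `X`: its set of rows at height `0`. -/
def PS2 {S : Type*} (X : Set (ℤ × ℤ → S)) : Set (ℤ → S) := (fun x => row x 0) '' X

/-- The shift orbit of a one-dimensional configuration. -/
def orbit1 {S : Type*} (y : ℤ → S) : Set (ℤ → S) := {z | ∃ n : ℤ, z = fun j => y (j + n)}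

/-- The R property of a two-dimensional subshift: whenever a row content `y` repeats (up to a
shift) in a configuration with no occurrence of `y` strictly in between, the rows in between,
their number, and the shift are uniquely determined (rows are indexed from `1` to `k`). -/
def RProperty {S : Type*} (X : Set (ℤ × ℤ → S)) : Prop :=
  ∀ y ∈ PS2 X, ∃ (k : ℕ) (z : ℕ → ℤ → S), 1 ≤ k ∧
    (∀ i, 1 ≤ i → i ≤ k → z i ∈ PS2 X) ∧
    z 1 = y ∧ z k ∈ orbit1 y ∧ (∀ i, 2 ≤ i → i ≤ k - 1 → z i ∉ orbit1 y) ∧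
    ∀ x ∈ X, ∀ m n : ℤ, m < n → row x m ∈ orbit1 y → row x n ∈ orbit1 y →
      (∀ i : ℤ, m < i → i < n → row x i ∉ orbit1 y) →
      n - m + 1 = (k : ℤ) ∧
      ∃ t : ℤ, ∀ i : ℤ, m ≤ i → i ≤ n → row x i = fun l => z (1 + (i - m).toNat) (l + t)


/-!
Periods pass down the subpattern order, and a configuration with two independent periods is
minimal: everything below it is a translate of it. So it suffices to show that `y < x` has a
period independent of the period `n` of `x`.

The patterns of `y` occur in `x`; reducing their positions modulo `n`, either one translate of
`x` carries them all (then `x ≤ y`), or they occur arbitrarily far away in the one direction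
that `n` leaves free.

If `n` is horizontal, `x` has finitely many distinct rows, so some row recurs infinitely often
in that direction, and the R property makes the rows of `x` there vertically periodic; `y`
inherits the vertical period.

If `n` is not horizontal, the patterns of `y` recur arbitrarily far along one row. If every row
of `x` is eventually horizontally periodic, `y` inherits a horizontal period. Otherwise two far
occurrences of a large pattern of `y` make `x` agree with a horizontal translate of itself on
wide strips parallel to `n`; shifting `x` independently at infinitely many such strips stays in
the SFT and gives uncountably many distinct rows, contradicting countability of `PS(X)`.
-/

open Function Filter Finset

section Basic

variable {S : Type*}

theorem periodic_of_shift2_eq {x : ℤ × ℤ → S} {n : ℤ × ℤ} (h : shift2 n x = x) :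
    Periodic x n := fun m => by simpa [shift2, add_comm] using congrFun h m

theorem IsSFT2.shift2_mem {X : Set (ℤ × ℤ → S)} (hX : IsSFT2 X) {x : ℤ × ℤ → S} (hx : x ∈ X)
    (g : ℤ × ℤ) : shift2 g x ∈ X := by
  obtain ⟨F, -, rfl⟩ := hX
  rintro P hP ⟨n, hn⟩
  exact hx P hP ⟨g + n, fun m hm => by simpa [shift2, add_assoc] using hn m hm⟩

theorem IsSFT2.row_mem_PS2 {X : Set (ℤ × ℤ → S)} (hX : IsSFT2 X) {x : ℤ × ℤ → S} (hx : x ∈ X)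
    (i : ℤ) : row x i ∈ PS2 X :=
  ⟨shift2 (0, i) x, hX.shift2_mem hx _, funext fun l => by simp [row, shift2]⟩

theorem IsSFT2.exists_window {X : Set (ℤ × ℤ → S)} (hX : IsSFT2 X) :
    ∃ D : Finset (ℤ × ℤ), ∀ x : ℤ × ℤ → S,
      (∀ n, ∃ x' ∈ X, ∀ m ∈ D, x (n + m) = x' (n + m)) → x ∈ X := by
  classical
  obtain ⟨F, hF, rfl⟩ := hX
  refine ⟨hF.toFinset.biUnion Prod.fst, fun x hloc P hP ⟨n, hn⟩ => ?_⟩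
  obtain ⟨x', hx', hagree⟩ := hloc n
  refine hx' P hP ⟨n, fun m hm => ?_⟩
  rw [← hagree m (Finset.mem_biUnion.2 ⟨P, hF.mem_toFinset.2 hP, hm⟩), hn m hm]

theorem mem_orbit1_self (w : ℤ → S) : w ∈ orbit1 w := ⟨0, by simp⟩

theorem orbit1_trans {w₁ w₂ w₃ : ℤ → S} (h₁₂ : w₂ ∈ orbit1 w₁) (h₂₃ : w₃ ∈ orbit1 w₂) :
    w₃ ∈ orbit1 w₁ := by
  obtain ⟨s, rfl⟩ := h₁₂
  obtain ⟨t, rfl⟩ := h₂₃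
  exact ⟨t + s, funext fun j => by simp [add_assoc]⟩

theorem mem_orbit1_of_eq_shift {w w₁ w₂ : ℤ → S} {t₁ t₂ : ℤ} (h₁ : w₁ = fun l => w (l + t₁))
    (h₂ : w₂ = fun l => w (l + t₂)) : w₂ ∈ orbit1 w₁ :=
  ⟨t₂ - t₁, by subst h₁ h₂; funext l; congr 1; ring⟩

def OccursAt (D : Finset (ℤ × ℤ)) (p x : ℤ × ℤ → S) (g : ℤ × ℤ) : Prop :=
  ∀ m ∈ D, x (g + m) = p m

theorem OccursAt.mono {D D' : Finset (ℤ × ℤ)} {p x : ℤ × ℤ → S} {g : ℤ × ℤ}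
    (h : OccursAt D' p x g) (hD : D ⊆ D') : OccursAt D p x g := fun m hm => h m (hD hm)

theorem OccursAt.sub_zsmul {D : Finset (ℤ × ℤ)} {p x : ℤ × ℤ → S} {g v : ℤ × ℤ}
    (h : OccursAt D p x g) (hx : Periodic x v) (j : ℤ) : OccursAt D p x (g - j • v) :=
  fun m hm => by rw [sub_add_eq_add_sub, hx.sub_zsmul_eq, h m hm]

theorem patLE2.exists_occursAt {x y : ℤ × ℤ → S} (h : patLE2 y x) (D : Finset (ℤ × ℤ)) :
    ∃ g, OccursAt D y x g := by
  obtain ⟨g, hg⟩ := h D 0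
  exact ⟨g, fun m hm => by simpa using hg m hm⟩

theorem patLE2_of_forall_occursAt {x y : ℤ × ℤ → S} {g : ℤ × ℤ}
    (h : ∀ D, OccursAt D y x g) : patLE2 x y := fun D n =>
  ⟨n - g, fun m _ => by rw [← h {n - g + m} _ (Finset.mem_singleton_self _)]; congr 1; abel⟩

theorem Function.Periodic.of_patLE2 {x y : ℤ × ℤ → S} {v : ℤ × ℤ} (hx : Periodic x v)
    (hyx : patLE2 y x) : Periodic y v := fun m => by
  obtain ⟨g, hg⟩ := hyx.exists_occursAt {m, m + v}
  rw [← hg m (by simp), ← hg (m + v) (by simp), ← add_assoc, hx]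

theorem periodic_of_forall_occursAt {x y : ℤ × ℤ → S} {v : ℤ × ℤ}
    (h : ∀ m, ∃ g, OccursAt {m, m + v} y x g ∧ x (g + (m + v)) = x (g + m)) :
    Periodic y v := fun m => by
  obtain ⟨g, hg, hper⟩ := h m
  rw [← hg m (by simp), ← hg (m + v) (by simp), hper]

end Basic

section Pigeonhole

variable {α ι : Type*}

theorem exists_forall_of_finset {P : Finset α → ι → Prop}
    (hP : ∀ ⦃D D'⦄, D ⊆ D' → ∀ g, P D' g → P D g) (G : Finset ι)
    (h : ∀ D, ∃ g ∈ G, P D g) : ∃ g ∈ G, ∀ D, P D g := by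
  classical
  by_contra! hG
  choose D hD using hG
  obtain ⟨g, hg, hPg⟩ := h (G.attach.biUnion fun g => D g.1 g.2)
  exact hD g hg (hP (subset_biUnion_of_mem (fun g : G => D g.1 g.2) (mem_attach _ ⟨g, hg⟩)) g hPg)

theorem exists_forall_or_unbounded {P : Finset α → ℤ → ι → Prop}
    (hP : ∀ ⦃D D'⦄, D ⊆ D' → ∀ t c, P D' t c → P D t c) (C : Finset ι)
    (h : ∀ D, ∃ t, ∃ c ∈ C, P D t c) :
    (∃ t c, ∀ D, P D t c) ∨
      ∃ c, (∀ M D, ∃ t, M ≤ t ∧ P D t c) ∨ (∀ M D, ∃ t, t ≤ M ∧ P D t c) := by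
  classical
  by_contra! hne
  obtain ⟨hfix, hunb⟩ := hne
  choose D₀ hD₀ using hfix
  choose hunb₁ hunb₂ using hunb
  choose M₁ D₁ hD₁ using hunb₁
  choose M₂ D₂ hD₂ using hunb₂
  obtain ⟨t, c, hc, hPc⟩ := h <| C.biUnion fun c =>
    D₁ c ∪ D₂ c ∪ (Icc (M₂ c) (M₁ c)).biUnion fun t => D₀ t c
  have hsub := subset_biUnion_of_mem (fun c =>
    D₁ c ∪ D₂ c ∪ (Icc (M₂ c) (M₁ c)).biUnion fun t => D₀ t c) hc
  rw [union_subset_iff, union_subset_iff] at hsub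
  obtain ⟨⟨hsub₁, hsub₂⟩, hsub₀⟩ := hsub
  rcases le_or_gt (M₁ c) t with h₁ | h₁
  · exact hD₁ c t h₁ (hP hsub₁ _ _ hPc)
  rcases le_or_gt t (M₂ c) with h₂ | h₂
  · exact hD₂ c t h₂ (hP hsub₂ _ _ hPc)
  · have ht : t ∈ Icc (M₂ c) (M₁ c) := mem_Icc.2 ⟨h₂.le, h₁.le⟩
    exact hD₀ t c (hP ((subset_biUnion_of_mem (fun t => D₀ t c) ht).trans hsub₀) _ _ hPc)

end Pigeonhole

section Minimal

variable {S : Type*}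

/-- Modulo the period lattice of `y` only finitely many positions remain, so a single translate
of `y` carries all the windows of `z`. -/
theorem patLE2_of_patLE2_of_periodic {y z : ℤ × ℤ → S} {d e f : ℤ} (hd : d ≠ 0) (hf : f ≠ 0)
    (h₁ : Periodic y (d, 0)) (h₂ : Periodic y (e, f)) (hzy : patLE2 z y) : patLE2 y z := by
  set N := d * f
  have hN : N ≠ 0 := mul_ne_zero hd hf
  have hN₁ : Periodic y (N, 0) := by simpa [N, mul_comm] using h₁.zsmul f
  have hN₂ : Periodic y (0, N) := by
    simpa [N, mul_comm] using (h₂.zsmul d).sub_period (h₁.zsmul e)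
  have hred : ∀ D g, OccursAt D z y g → OccursAt D z y (g.1 % N, g.2 % N) := fun D g hg => by
    convert (hg.sub_zsmul hN₁ (g.1 / N)).sub_zsmul hN₂ (g.2 / N) using 1
    ext <;> simp [Int.emod_def, mul_comm]
  have hmem : ∀ g : ℤ × ℤ, (g.1 % N, g.2 % N) ∈ Ico 0 |N| ×ˢ Ico 0 |N| := fun g =>
    mem_product.2 ⟨mem_Ico.2 ⟨Int.emod_nonneg _ hN, Int.emod_lt_abs _ hN⟩,
      mem_Ico.2 ⟨Int.emod_nonneg _ hN, Int.emod_lt_abs _ hN⟩⟩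
  obtain ⟨g, -, hg⟩ := exists_forall_of_finset (P := fun D g => OccursAt D z y g)
    (fun _ _ hD _ hg => hg.mono hD) _ fun D => by
      obtain ⟨g, hg⟩ := hzy.exists_occursAt D
      exact ⟨_, hmem g, hred D g hg⟩
  exact patLE2_of_forall_occursAt hg

end Minimal

section RProperty

variable {S : Type*} {X : Set (ℤ × ℤ → S)} {x : ℤ × ℤ → S} {u : ℤ → S} {k : ℕ}
  {z : ℕ → ℤ → S}

/-- The last clause of `RProperty` for the row `u`. -/
def RBlocks (X : Set (ℤ × ℤ → S)) (u : ℤ → S) (k : ℕ) (z : ℕ → ℤ → S) : Prop :=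
  ∀ x ∈ X, ∀ m n : ℤ, m < n → row x m ∈ orbit1 u → row x n ∈ orbit1 u →
    (∀ i : ℤ, m < i → i < n → row x i ∉ orbit1 u) →
    n - m + 1 = (k : ℤ) ∧
    ∃ t : ℤ, ∀ i : ℤ, m ≤ i → i ≤ n → row x i = fun l => z (1 + (i - m).toNat) (l + t)

theorem RProperty.exists_rBlocks (hR : RProperty X) (hu : u ∈ PS2 X) :
    ∃ k z e, z 1 = u ∧ (z k = fun l => u (l + e)) ∧ RBlocks X u k z := by
  obtain ⟨k, z, -, -, hz1, ⟨e, he⟩, -, hU⟩ := hR u hu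
  exact ⟨k, z, e, hz1, he, hU⟩

theorem periodic_row {A : ℤ} (hper : Periodic x (A, 0)) (i : ℤ) : Periodic (row x i) A :=
  fun l => by simpa [row] using hper (l, i)

theorem RBlocks.next (hU : RBlocks X u k z) (hx : x ∈ X) {h h' : ℤ}
    (hh : row x h ∈ orbit1 u) (hh' : row x h' ∈ orbit1 u) (hlt : h < h') :
    0 < (k : ℤ) - 1 ∧ h + (k - 1) ≤ h' ∧ row x (h + (k - 1)) ∈ orbit1 u ∧
      ∃ t, ∀ r, 0 ≤ r → r ≤ (k : ℤ) - 1 → row x (h + r) = fun l => z (1 + r.toNat) (l + t) := by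
  obtain ⟨n, ⟨hhn, hn⟩, hmin⟩ := Int.exists_least_of_bdd
    (P := fun n => h < n ∧ row x n ∈ orbit1 u) ⟨h, fun n hn => hn.1.le⟩ ⟨h', hlt, hh'⟩
  obtain ⟨hk, t, ht⟩ := hU x hx h n hhn hh hn fun i hi hin hi' =>
    absurd hin (not_lt.2 (hmin i ⟨hi, hi'⟩))
  obtain rfl : n = h + (k - 1) := by omega
  exact ⟨by omega, hmin h' ⟨hlt, hh'⟩, hn, t, fun r hr₀ hr =>
    by simpa using ht (h + r) (by omega) (by omega)⟩

theorem RBlocks.row_eq_shift (hU : RBlocks X u k z) (hz1 : z 1 = u) {e : ℤ}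
    (he : z k = fun l => u (l + e)) (hx : x ∈ X) {h h' τ : ℤ}
    (hτ : row x h = fun l => u (l + τ)) (hh' : row x h' ∈ orbit1 u) (hle : h ≤ h') :
    ∃ c : ℕ, h' = h + c * ((k : ℤ) - 1) ∧ row x h' = fun l => u (l + (τ + c * e)) := by
  rcases hle.eq_or_lt with rfl | hlt
  · exact ⟨0, by simp, by simpa using hτ⟩
  obtain ⟨hk, hle', hnext, t, ht⟩ := hU.next hx ⟨τ, hτ⟩ hh' hlt
  have htτ : ∀ l, u (l + t) = u (l + τ) := fun l => by
    simpa [hz1, hτ] using (congrFun (ht 0 le_rfl hk.le) l).symm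
  have hnew : row x (h + (k - 1)) = fun l => u (l + (τ + e)) := by
    funext l
    rw [ht _ hk.le le_rfl, show 1 + ((k : ℤ) - 1).toNat = k by omega, he]
    show u (l + t + e) = u (l + (τ + e))
    rw [add_right_comm, htτ, add_right_comm, add_assoc]
  obtain ⟨c, hc, hrow⟩ := RBlocks.row_eq_shift hU hz1 he hx hnew hh' hle'
  refine ⟨c + 1, by rw [hc]; push_cast; ring, by rw [hrow]; funext l; congr 1; push_cast; ring⟩
termination_by (h' - h).toNat
decreasing_by omega

/-- By the R property for the row `i`, the two shifts are `c * e` and `A * c * e` for one `c`,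
and `A * c * e` is a period of that row. -/
theorem row_add_mul_eq_row (hR : RProperty X) (hx : x ∈ X) {i A D : ℤ} (hi : row x i ∈ PS2 X)
    (hA : 0 ≤ A) (hper : Periodic (row x i) A) (hD : 0 < D)
    (h₁ : row x (i + D) ∈ orbit1 (row x i)) (h₂ : row x (i + A * D) ∈ orbit1 (row x i)) :
    row x (i + A * D) = row x i := by
  obtain ⟨k, z, e, hz1, he, hU⟩ := hR.exists_rBlocks hi
  have h₀ : row x i = fun l => row x i (l + 0) := by simp
  obtain ⟨c₁, hc₁, -⟩ := hU.row_eq_shift hz1 he hx h₀ h₁ (by omega)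
  obtain ⟨c₂, hc₂, hrow⟩ := hU.row_eq_shift hz1 he hx h₀ h₂ (by nlinarith)
  have hk : (k : ℤ) - 1 ≠ 0 := fun h => by rw [h] at hc₁; omega
  have hc : (c₂ : ℤ) = A * c₁ := mul_right_cancel₀ hk (by linear_combination A * hc₁ - hc₂)
  rw [hrow, hc]
  funext l
  simpa [mul_comm, mul_left_comm, mul_assoc] using hper.int_mul (c₁ * e) l

theorem RBlocks.mem_orbit1_add_mul (hU : RBlocks X u k z) (hx : x ∈ X) (hk : 0 < (k : ℤ) - 1)
    {q h' : ℤ} (hq : row x q ∈ orbit1 u) (hh' : row x h' ∈ orbit1 u) (j : ℕ)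
    (hj : q + j * ((k : ℤ) - 1) ≤ h') : row x (q + j * (k - 1)) ∈ orbit1 u := by
  induction j with
  | zero => simpa using hq
  | succ j ih =>
    push_cast at hj
    convert (hU.next hx (ih (by nlinarith)) hh' (by nlinarith)).2.2.1 using 2
    push_cast; ring

theorem RBlocks.row_add_mem_orbit1 (hU : RBlocks X u k z) (hx : x ∈ X) (hk : 0 < (k : ℤ) - 1)
    {q h' i : ℤ} (hq : row x q ∈ orbit1 u) (hh' : row x h' ∈ orbit1 u) (hqi : q ≤ i)
    (hi : i + 2 * ((k : ℤ) - 1) ≤ h') : row x (i + (k - 1)) ∈ orbit1 (row x i) := by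
  obtain ⟨j, r, hr₀, hrK, rfl⟩ : ∃ j : ℕ, ∃ r, 0 ≤ r ∧ r < (k : ℤ) - 1 ∧
      i = q + j * ((k : ℤ) - 1) + r :=
    ⟨((i - q) / (k - 1)).toNat, (i - q) % (k - 1), Int.emod_nonneg _ hk.ne',
      Int.emod_lt_of_pos _ hk, by
        rw [Int.toNat_of_nonneg (Int.ediv_nonneg (by omega) hk.le), Int.emod_def]; ring⟩
  have hq₀ := hU.mem_orbit1_add_mul hx hk hq hh' j (by nlinarith)
  have hq₁ := hU.mem_orbit1_add_mul hx hk hq hh' (j + 1) (by push_cast; nlinarith)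
  obtain ⟨-, -, -, t₀, ht₀⟩ := hU.next hx hq₀ hh' (by nlinarith)
  obtain ⟨-, -, -, t₁, ht₁⟩ := hU.next hx hq₁ hh' (by push_cast; nlinarith)
  refine mem_orbit1_of_eq_shift (t₂ := t₁) (ht₀ r hr₀ hrK.le) ?_
  convert ht₁ r hr₀ hrK.le using 2
  push_cast; ring

theorem RBlocks.row_add_mul_mem_orbit1 (hU : RBlocks X u k z) (hx : x ∈ X)
    (hk : 0 < (k : ℤ) - 1) {q h' i : ℤ} (hq : row x q ∈ orbit1 u) (hh' : row x h' ∈ orbit1 u)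
    (hqi : q ≤ i) (j : ℕ) (hj : i + (j + 1) * ((k : ℤ) - 1) ≤ h') :
    row x (i + j * (k - 1)) ∈ orbit1 (row x i) := by
  induction j with
  | zero => simpa using mem_orbit1_self _
  | succ j ih =>
    push_cast at hj
    refine orbit1_trans (ih (by nlinarith)) ?_
    convert hU.row_add_mem_orbit1 hx hk hq hh' (i := i + j * (k - 1)) (by nlinarith)
      (by nlinarith) using 2
    push_cast; ring

/-- Each row of a return block of `u` reappears, up to shift, one block of `k - 1` rows later,
so `row_add_mul_eq_row` applies with `D = k - 1`. -/
theorem exists_row_period (hX : IsSFT2 X) (hR : RProperty X) (hx : x ∈ X) {A : ℤ} (hA : 0 < A)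
    (hper : Periodic x (A, 0)) (hu : u ∈ PS2 X) {h₀ h₁ : ℤ} (hlt : h₀ < h₁)
    (h₀u : row x h₀ ∈ orbit1 u) (h₁u : row x h₁ ∈ orbit1 u) :
    ∃ P C, 0 < P ∧ ∀ q i h', row x q ∈ orbit1 u → row x h' ∈ orbit1 u → q ≤ i → i + C ≤ h' →
      row x (i + P) = row x i := by
  obtain ⟨k, z, -, -, -, hU⟩ := hR.exists_rBlocks hu
  have hk := (hU.next hx h₀u h₁u hlt).1
  refine ⟨A * (k - 1), (A + 1) * (k - 1), mul_pos hA hk, fun q i h' hq hh' hqi hi => ?_⟩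
  have hAn : ((A.toNat : ℕ) : ℤ) = A := Int.toNat_of_nonneg hA.le
  refine row_add_mul_eq_row hR hx (hX.row_mem_PS2 hx i) hA.le (periodic_row hper i) hk ?_ ?_
  · simpa using hU.row_add_mul_mem_orbit1 hx hk hq hh' hqi 1
      (by push_cast; nlinarith [mul_nonneg (by omega : (0 : ℤ) ≤ A - 1) hk.le])
  · simpa [hAn, mul_comm] using
      hU.row_add_mul_mem_orbit1 hx hk hq hh' hqi A.toNat (by rw [hAn]; linarith)

end RProperty

section HorizontalPeriodCase

variable {S : Type*} {X : Set (ℤ × ℤ → S)} {x y : ℤ × ℤ → S}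

/-- A horizontally periodic configuration has finitely many distinct rows. -/
theorem exists_row_frequently [Finite S] {A : ℤ} (hA : A ≠ 0) (hper : Periodic x (A, 0))
    (f : ℕ → ℤ) : ∃ u, ∀ N, ∃ n > N, row x (f n) = u := by
  have : Finite {w : ℤ → S // Periodic w A} := by
    refine Finite.of_injective (fun w (r : Set.Ico (0 : ℤ) |A|) => w.1 r) fun w w' h => ?_
    have hmod : ∀ w : {w : ℤ → S // Periodic w A}, ∀ l, w.1 l = w.1 (l % A) := fun w l => by
      rw [Int.emod_def, mul_comm, ← smul_eq_mul, w.2.sub_zsmul_eq]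
    ext l
    rw [hmod w, hmod w']
    exact congrFun h ⟨l % A, Int.emod_nonneg _ hA, Int.emod_lt_abs _ hA⟩
  obtain ⟨w, hw⟩ := Finite.exists_infinite_fiber fun n =>
    (⟨row x (f n), periodic_row hper _⟩ : {w : ℤ → S // Periodic w A})
  refine ⟨w.1, fun N => ?_⟩
  obtain ⟨n, hn, hNn⟩ := (Set.infinite_coe_iff.1 hw).exists_gt N
  exact ⟨n, hNn, congrArg Subtype.val hn⟩

theorem periodic_of_rows_periodic {P c : ℤ} {R : Set ℤ}
    (hrows : ∀ i ∈ R, row x (i + P) = row x i)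
    (hocc : ∀ m : ℤ × ℤ, ∃ t, t + m.2 ∈ R ∧ OccursAt {m, m + (0, P)} y x (c, t)) :
    Periodic y (0, P) :=
  periodic_of_forall_occursAt fun m => by
    obtain ⟨t, ht, hocc⟩ := hocc m
    refine ⟨(c, t), hocc, ?_⟩
    have := congrFun (hrows _ ht) (c + m.1)
    simp only [row] at this
    convert this using 2 <;> ext <;> simp [add_assoc]

theorem exists_vertical_period_of_occursAt_above [Finite S] (hX : IsSFT2 X) (hR : RProperty X)
    (hx : x ∈ X) {A c : ℤ} (hA : 0 < A) (hper : Periodic x (A, 0))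
    (hocc : ∀ M D, ∃ t, M ≤ t ∧ OccursAt D y x (c, t)) : ∃ P, 0 < P ∧ Periodic y (0, P) := by
  obtain ⟨u, hu⟩ := exists_row_frequently hA.ne' hper fun n => (n : ℤ)
  obtain ⟨n₀, -, hn₀⟩ := hu 0
  obtain ⟨n₁, hn₁, hn₁u⟩ := hu n₀
  have hmem : ∀ {i}, row x i = u → row x i ∈ orbit1 u := fun h => h ▸ mem_orbit1_self _
  obtain ⟨P, C, hP, hrows⟩ := exists_row_period hX hR hx hA hper
    (hn₀ ▸ hX.row_mem_PS2 hx _) (Nat.cast_lt.2 hn₁) (hmem hn₀) (hmem hn₁u)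
  refine ⟨P, hP, periodic_of_rows_periodic (x := x) (c := c) (R := Set.Ici (n₀ : ℤ))
    (fun i hi => ?_) fun m => ?_⟩
  · obtain ⟨n, hn, hnu⟩ := hu (i + C).toNat
    exact hrows n₀ i n (hmem hn₀) (hmem hnu) hi (by omega)
  · obtain ⟨t, ht, hocc⟩ := hocc (n₀ - m.2) {m, m + (0, P)}
    exact ⟨t, by simp only [Set.mem_Ici]; omega, hocc⟩

theorem exists_vertical_period_of_occursAt_below [Finite S] (hX : IsSFT2 X) (hR : RProperty X)
    (hx : x ∈ X) {A c : ℤ} (hA : 0 < A) (hper : Periodic x (A, 0))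
    (hocc : ∀ M D, ∃ t, t ≤ M ∧ OccursAt D y x (c, t)) : ∃ P, 0 < P ∧ Periodic y (0, P) := by
  obtain ⟨u, hu⟩ := exists_row_frequently hA.ne' hper fun n => -(n : ℤ)
  obtain ⟨n₀, -, hn₀⟩ := hu 0
  obtain ⟨n₁, hn₁, hn₁u⟩ := hu n₀
  have hmem : ∀ {i}, row x i = u → row x i ∈ orbit1 u := fun h => h ▸ mem_orbit1_self _
  obtain ⟨P, C, hP, hrows⟩ := exists_row_period hX hR hx hA hper
    (hn₀ ▸ hX.row_mem_PS2 hx _) (neg_lt_neg (Nat.cast_lt.2 hn₁)) (hmem hn₁u) (hmem hn₀)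
  refine ⟨P, hP, periodic_of_rows_periodic (x := x) (c := c) (R := {i | i + C ≤ -n₀})
    (fun i hi => ?_) fun m => ?_⟩
  · obtain ⟨n, hn, hnu⟩ := hu (-i).toNat
    exact hrows (-n) i (-n₀) (hmem hnu) (hmem hn₀) (by omega) hi
  · obtain ⟨t, ht, hocc⟩ := hocc (-n₀ - C - m.2) {m, m + (0, P)}
    exact ⟨t, show t + m.2 + C ≤ -n₀ by omega, hocc⟩

theorem exists_vertical_period_of_patLT2 [Finite S] (hX : IsSFT2 X) (hR : RProperty X)
    (hx : x ∈ X) {A : ℤ} (hA : A ≠ 0) (hper : Periodic x (A, 0)) (hyx : patLE2 y x)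
    (hxy : ¬ patLE2 x y) : ∃ P, 0 < P ∧ Periodic y (0, P) := by
  wlog hpos : 0 < A generalizing A
  · exact this (neg_ne_zero.2 hA) (by simpa using hper.neg) (by omega)
  have hred : ∀ D, ∃ t, ∃ c ∈ Ico 0 A, OccursAt D y x (c, t) := fun D => by
    obtain ⟨g, hg⟩ := hyx.exists_occursAt D
    refine ⟨g.2, g.1 % A, mem_Ico.2 ⟨Int.emod_nonneg _ hA, Int.emod_lt_of_pos _ hpos⟩, ?_⟩
    convert hg.sub_zsmul hper (g.1 / A) using 1
    ext <;> simp [Int.emod_def, mul_comm]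
  rcases exists_forall_or_unbounded (P := fun D t c => OccursAt D y x (c, t))
    (fun _ _ hD _ _ h => h.mono hD) _ hred with ⟨t, c, hall⟩ | ⟨c, hup | hdown⟩
  · exact absurd (patLE2_of_forall_occursAt hall) hxy
  · exact exists_vertical_period_of_occursAt_above hX hR hx hpos hper hup
  · exact exists_vertical_period_of_occursAt_below hX hR hx hpos hper hdown

end HorizontalPeriodCase

section Bands

variable {S : Type*} {x y : ℤ × ℤ → S} {v : ℤ × ℤ}

/-- Constant along the lines parallel to `v`. -/
def crossWith (v : ℤ × ℤ) : ℤ × ℤ →+ ℤ :=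
  AddMonoidHom.mk' (fun m => m.1 * v.2 - m.2 * v.1) fun m m' => by
    simp only [Prod.fst_add, Prod.snd_add]; ring

@[simp] theorem crossWith_apply (v m : ℤ × ℤ) : crossWith v m = m.1 * v.2 - m.2 * v.1 := rfl

def IsBand (x : ℤ × ℤ → S) (φ : ℤ × ℤ →+ ℤ) (θ R δ : ℤ) : Prop :=
  ∀ m, |φ m - θ| ≤ R → x (m + (δ, 0)) = x m

/-- Two far apart occurrences of one large pattern of `y` along a row of the `v`-periodic `x`
make `x` agree with a horizontal translate of itself near that row, and `v`-periodicity
spreads the agreement along a strip parallel to `v`. -/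
theorem exists_isBand (hper : Periodic x v) (hv : 0 < v.2) {c : ℤ}
    (hocc : ∀ M D, ∃ t, M ≤ t ∧ OccursAt D y x (t, c)) (M R : ℤ) :
    ∃ θ δ, M ≤ θ ∧ 0 < δ ∧ IsBand x (crossWith v) θ R δ := by
  set W := R + v.2 * |v.1| + v.2
  obtain ⟨u₁, hu₁, h₁⟩ := hocc (|M| + |c * v.1|) (Icc (-W) W ×ˢ Icc (-W) W)
  obtain ⟨u₂, hu₂, h₂⟩ := hocc (u₁ + 1) (Icc (-W) W ×ˢ Icc (-W) W)
  refine ⟨crossWith v (u₁, c), u₂ - u₁, ?_, by omega, fun m hm => ?_⟩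
  · have hu₁₀ : 0 ≤ u₁ := by linarith [abs_nonneg M, abs_nonneg (c * v.1)]
    simp only [crossWith_apply]
    nlinarith [le_abs_self M, le_abs_self (c * v.1),
      mul_le_mul_of_nonneg_left (show 1 ≤ v.2 by omega) hu₁₀]
  set j := (m.2 - c) / v.2
  set r := (m.2 - c) % v.2
  set l := m.1 - u₁ - j * v.1
  have hr₀ : 0 ≤ r := Int.emod_nonneg _ hv.ne'
  have hrv : r < v.2 := Int.emod_lt_of_pos _ hv
  have hm₂ : m.2 = c + r + j * v.2 := by simp only [r, j, Int.emod_def]; ring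
  have hl : |l| ≤ R + v.2 * |v.1| := by
    have hlv : l * v.2 = (crossWith v m - crossWith v (u₁, c)) + r * v.1 := by
      simp only [crossWith_apply, l, hm₂]; ring
    have hrv₁ : |r * v.1| ≤ v.2 * |v.1| := by
      rw [abs_mul, abs_of_nonneg hr₀]; exact mul_le_mul_of_nonneg_right hrv.le (abs_nonneg _)
    calc |l| ≤ |l| * v.2 := le_mul_of_one_le_right (abs_nonneg _) hv
      _ = |l * v.2| := by rw [abs_mul, abs_of_pos hv]
      _ ≤ R + v.2 * |v.1| := by rw [hlv]; exact (abs_add_le _ _).trans (add_le_add hm hrv₁)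
  have hR : 0 ≤ R := (abs_nonneg _).trans hm
  have hlr : (l, r) ∈ Icc (-W) W ×ˢ Icc (-W) W := by
    rw [abs_le] at hl
    simp only [mem_product, mem_Icc]
    refine ⟨⟨?_, ?_⟩, ?_, ?_⟩ <;> nlinarith [abs_nonneg v.1]
  have e₁ : m = (u₁, c) + (l, r) + j • v := by ext <;> simp [l, hm₂]; ring
  have e₂ : m + (u₂ - u₁, 0) = (u₂, c) + (l, r) + j • v := by ext <;> simp [l, hm₂]; ring
  rw [e₂, hper.zsmul, h₂ _ hlr, ← h₁ _ hlr, ← hper.zsmul j, ← e₁]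

theorem eventually_periodic_mul {w : ℤ → S} {P : ℤ} (hP : 0 ≤ P)
    (h : ∀ᶠ t in atTop, w (t + P) = w t) (n : ℕ) : ∀ᶠ t in atTop, w (t + n * P) = w t := by
  obtain ⟨N, hN⟩ := eventually_atTop.1 h
  refine eventually_atTop.2 ⟨N, fun t ht => ?_⟩
  induction n with
  | zero => simp
  | succ n ih =>
    rw [Nat.cast_succ, add_mul, one_mul, ← add_assoc, hN _ (by nlinarith), ih]

/-- The rows of a `v`-periodic configuration are translates of the `v.2` rows `0, …, v.2 - 1`,
so eventual periods of these rows give a common eventual period of all rows. -/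
theorem exists_eventual_period (hper : Periodic x v) (hv : 0 < v.2)
    (h : ∀ i, ∃ P, 0 < P ∧ ∀ᶠ t in atTop, row x i (t + P) = row x i t) :
    ∃ P, 0 < P ∧ ∀ i, ∀ᶠ t in atTop, row x i (t + P) = row x i t := by
  choose P hP hev using h
  refine ⟨∏ c ∈ Ico 0 v.2, P c, prod_pos fun c _ => hP c, fun i => ?_⟩
  have hc : i % v.2 ∈ Ico 0 v.2 := mem_Ico.2 ⟨Int.emod_nonneg _ hv.ne', Int.emod_lt_of_pos _ hv⟩
  obtain ⟨n, hn⟩ := dvd_prod_of_mem P hc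
  have hn₀ : 0 ≤ n := by
    have := prod_pos (s := Ico 0 v.2) fun c _ => hP c
    rw [hn] at this
    exact (pos_of_mul_pos_right this (hP _).le).le
  lift n to ℕ using hn₀
  have hrow : ∀ t, row x i t = row x (i % v.2) (t - i / v.2 * v.1) := fun t => by
    show x (t, i) = x (t - i / v.2 * v.1, i % v.2)
    rw [← hper.zsmul (i / v.2) (t - i / v.2 * v.1, i % v.2)]
    congr 1
    ext
    · simp
    · simp [Int.emod_def]; ring
  have hlim : Tendsto (fun t => t - i / v.2 * v.1) atTop atTop :=
    tendsto_atTop_add_const_right _ _ tendsto_id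
  filter_upwards [hlim.eventually (eventually_periodic_mul (hP _).le (hev _) n)] with t ht
  rw [hrow, hrow, hn, ← ht, mul_comm]
  congr 1
  ring

theorem periodic_of_eventually_periodic_rows {P c : ℤ}
    (hocc : ∀ M D, ∃ t, M ≤ t ∧ OccursAt D y x (t, c))
    (hev : ∀ i, ∀ᶠ t in atTop, row x i (t + P) = row x i t) : Periodic y (P, 0) :=
  periodic_of_forall_occursAt fun m => by
    obtain ⟨N, hN⟩ := eventually_atTop.1 (hev (c + m.2))
    obtain ⟨t, ht, hocc⟩ := hocc (N - m.1) {m, m + (P, 0)}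
    refine ⟨(t, c), hocc, ?_⟩
    have := hN (t + m.1) (by omega)
    simp only [row] at this
    convert this using 2 <;> ext <;> simp; ring

end Bands

section Splice

variable {S : Type*} {X : Set (ℤ × ℤ → S)} {x : ℤ × ℤ → S} {φ : ℤ × ℤ →+ ℤ} {i₀ : ℤ} {C : ℕ}

theorem AddMonoidHom.map_mk_zero (φ : ℤ × ℤ →+ ℤ) (s : ℤ) : φ (s, 0) = s * φ (1, 0) := by
  rw [← smul_eq_mul, ← map_zsmul]
  simp

/-- Data for splicing translates of `x` along the level sets of `φ`: crossing the threshold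
`θ j`, the translate may jump by `δ j` without creating patterns of diameter `C` that `x` lacks
(`band`, whose width absorbs the earlier jumps), and just above `θ j` row `i₀` sees the jump
(`witness`). -/
structure SpliceData (x : ℤ × ℤ → S) (φ : ℤ × ℤ →+ ℤ) (i₀ : ℤ) (C : ℕ) where
  θ : ℕ → ℤ
  δ : ℕ → ℤ
  δ_pos : ∀ j, 0 < δ j
  gap : ∀ j, θ j + 2 * C < θ (j + 1)
  band : ∀ j, IsBand x φ (θ j) (|φ (1, 0)| * ∑ i ∈ range j, δ i + 2 * C) (δ j)
  witness : ∀ j d, 0 ≤ d → d ≤ ∑ i ∈ range j, δ i →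
    ∃ l, θ j ≤ φ (l, i₀) ∧ φ (l, i₀) < θ (j + 1) ∧ x (l + d + δ j, i₀) ≠ x (l + d, i₀)

namespace SpliceData

variable (σ : SpliceData x φ i₀ C)

theorem θ_strictMono : StrictMono σ.θ :=
  strictMono_nat_of_lt_succ fun j => by linarith [σ.gap j]

theorem exists_lt_θ (c : ℤ) : ∃ j, c < σ.θ j := by
  have h : ∀ j : ℕ, σ.θ 0 + j ≤ σ.θ j := fun j => by
    induction j with
    | zero => simp
    | succ j ih => push_cast; linarith [σ.gap j]
  exact ⟨(c - σ.θ 0 + 1).toNat, by have := h (c - σ.θ 0 + 1).toNat; omega⟩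

def count (c : ℤ) : ℕ := Nat.find (σ.exists_lt_θ c)

theorem lt_count_iff {j : ℕ} {c : ℤ} : j < σ.count c ↔ σ.θ j ≤ c := by
  refine ⟨fun h => not_lt.1 (Nat.find_min (σ.exists_lt_θ c) h), fun h => ?_⟩
  by_contra! hle
  exact (Nat.find_spec (σ.exists_lt_θ c)).not_ge (h.trans' (σ.θ_strictMono.monotone hle))

/-- A window of `φ`-width `2 C` contains at most one threshold. -/
theorem count_eq_or_eq_succ {c c' : ℤ} (h₁ : c - C ≤ c') (h₂ : c' ≤ c + C) :
    σ.count c' = σ.count (c - C) ∨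
      σ.count c' = σ.count (c - C) + 1 ∧ |c' - σ.θ (σ.count (c - C))| ≤ 2 * C := by
  set J := σ.count (c - C)
  have hJ : c - C < σ.θ J := not_le.1 fun h => lt_irrefl J (σ.lt_count_iff.2 h)
  have hJ' : J ≤ σ.count c' := by
    by_contra! h
    exact lt_irrefl _ (σ.lt_count_iff.2 ((σ.lt_count_iff.1 h).trans h₁))
  have hJ'' : σ.count c' ≤ J + 1 := by
    by_contra! h
    linarith [σ.lt_count_iff.1 h, σ.gap J]
  rcases hJ'.eq_or_lt with h | h
  · exact Or.inl h.symm
  · have := σ.lt_count_iff.1 h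
    exact Or.inr ⟨by omega, abs_le.2 ⟨by linarith, by linarith⟩⟩

theorem sum_indicator_nonneg (α : Set ℕ) (n : ℕ) : 0 ≤ ∑ j ∈ range n, α.indicator σ.δ j :=
  sum_nonneg fun j _ => Set.indicator_nonneg (fun j _ => (σ.δ_pos j).le) j

theorem sum_indicator_le (α : Set ℕ) (n : ℕ) :
    ∑ j ∈ range n, α.indicator σ.δ j ≤ ∑ j ∈ range n, σ.δ j :=
  sum_le_sum fun j _ => Set.indicator_le_self' (fun j _ => (σ.δ_pos j).le) j

/-- The translate of `x` that jumps by `δ j` at the thresholds `θ j` with `j ∈ α`. -/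
noncomputable def splice (α : Set ℕ) (m : ℤ × ℤ) : S :=
  x (m + (∑ j ∈ range (σ.count (φ m)), α.indicator σ.δ j, 0))

theorem splice_eq_near (α : Set ℕ) (n : ℤ × ℤ) :
    ∃ g, ∀ m, |φ m| ≤ C → σ.splice α (n + m) = x (n + m + (g, 0)) := by
  set J := σ.count (φ n - C)
  set d := ∑ j ∈ range J, α.indicator σ.δ j
  refine ⟨d, fun m hm => ?_⟩
  rw [abs_le] at hm
  rcases σ.count_eq_or_eq_succ (c := φ n) (c' := φ (n + m)) (by simp; linarith)
    (by simp; linarith) with h | ⟨h, hθ⟩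
  · simp only [splice, h]
    rfl
  simp only [splice, h, sum_range_succ]
  by_cases hα : J ∈ α
  · rw [Set.indicator_of_mem hα, show (d + σ.δ J, (0 : ℤ)) = (d, 0) + (σ.δ J, 0) by simp,
      ← add_assoc]
    refine σ.band J _ ?_
    rw [map_add, φ.map_mk_zero]
    have hd₀ := σ.sum_indicator_nonneg α J
    have hd := σ.sum_indicator_le α J
    calc |φ (n + m) + d * φ (1, 0) - σ.θ J|
        ≤ |φ (n + m) - σ.θ J| + |d * φ (1, 0)| := by
          rw [add_sub_right_comm]; exact abs_add_le _ _
      _ ≤ 2 * C + |φ (1, 0)| * ∑ i ∈ range J, σ.δ i := by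
          rw [abs_mul, abs_of_nonneg hd₀, mul_comm]
          exact add_le_add hθ (mul_le_mul_of_nonneg_left hd (abs_nonneg _))
      _ = _ := add_comm _ _
  · rw [Set.indicator_of_notMem hα, add_zero]

theorem splice_mem (hX : IsSFT2 X) (hx : x ∈ X) {D : Finset (ℤ × ℤ)}
    (hD : ∀ x', (∀ n, ∃ x'' ∈ X, ∀ m ∈ D, x' (n + m) = x'' (n + m)) → x' ∈ X)
    (hDC : ∀ m ∈ D, |φ m| ≤ C) (α : Set ℕ) : σ.splice α ∈ X :=
  hD _ fun n => by
    obtain ⟨g, hg⟩ := σ.splice_eq_near α n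
    exact ⟨shift2 (g, 0) x, hX.shift2_mem hx _, fun m hm => by
      rw [hg m (hDC m hm), shift2, add_comm (g, 0)]⟩

/-- Choices `α ≠ β` first differ at some `J`; above `θ J` the two splices are shifted against
each other by `δ J` on row `i₀`, where the witness shows a difference. -/
theorem row_splice_injective : Injective fun α => row (σ.splice α) i₀ := by
  classical
  intro α β hαβ
  by_contra hne
  have hex : ∃ j, ¬ (j ∈ α ↔ j ∈ β) := by
    by_contra! h
    exact hne (Set.ext h)
  set J := Nat.find hex
  have hsum : ∑ j ∈ range J, α.indicator σ.δ j = ∑ j ∈ range J, β.indicator σ.δ j :=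
    sum_congr rfl fun j hj => by
      simp only [Set.indicator_apply, not_not.1 (Nat.find_min hex (mem_range.1 hj))]
  obtain ⟨l, hl₁, hl₂, hl⟩ := σ.witness J _ (σ.sum_indicator_nonneg α J)
    (σ.sum_indicator_le α J)
  have hcount : σ.count (φ (l, i₀)) = J + 1 :=
    le_antisymm (not_lt.1 fun h => hl₂.not_ge (σ.lt_count_iff.1 h)) (σ.lt_count_iff.2 hl₁)
  have hrow := congrFun hαβ l
  simp only [row, splice, hcount, sum_range_succ, ← hsum, Prod.mk_add_mk, add_zero] at hrow
  have hJ := Nat.find_spec hex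
  by_cases hα : J ∈ α
  · have hβ : J ∉ β := fun hβ => hJ ⟨fun _ => hβ, fun _ => hα⟩
    rw [Set.indicator_of_mem hα, Set.indicator_of_notMem hβ, add_zero, ← add_assoc] at hrow
    exact hl hrow
  · have hβ : J ∈ β := by_contra fun hβ => hJ ⟨fun h => absurd h hα, fun h => absurd h hβ⟩
    rw [Set.indicator_of_notMem hα, Set.indicator_of_mem hβ, add_zero, ← add_assoc] at hrow
    exact hl hrow.symm

theorem exists_next_band (hband : ∀ M R, ∃ θ δ, M ≤ θ ∧ 0 < δ ∧ IsBand x φ θ R δ)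
    (hwit : ∀ δ, 0 < δ → ∀ M, ∃ l, M ≤ φ (l, i₀) ∧ x (l + δ, i₀) ≠ x (l, i₀))
    (C : ℕ) {θ δ s : ℤ} (hδ : 0 < δ) :
    ∃ θ' δ', 0 < δ' ∧ IsBand x φ θ' (|φ (1, 0)| * (s + δ) + 2 * C) δ' ∧ θ + 2 * C < θ' ∧
      ∀ d, 0 ≤ d → d ≤ s →
        ∃ l, θ ≤ φ (l, i₀) ∧ φ (l, i₀) < θ' ∧ x (l + d + δ, i₀) ≠ x (l + d, i₀) := by
  choose l hl using fun d => hwit δ hδ (θ + φ (d, 0))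
  obtain ⟨B, hB⟩ := ((Icc 0 s).image fun d => φ (l d - d, i₀)).bddAbove
  obtain ⟨θ', δ', hθ', hδ', hb'⟩ :=
    hband (max (θ + 2 * C + 1) (B + 1)) (|φ (1, 0)| * (s + δ) + 2 * C)
  refine ⟨θ', δ', hδ', hb', by linarith [le_max_left (θ + 2 * C + 1) (B + 1)],
    fun d hd₀ hds => ⟨l d - d, ?_, ?_, by simpa using (hl d).2⟩⟩
  · rw [show ((l d - d, i₀) : ℤ × ℤ) = (l d, i₀) - (d, 0) by simp, map_sub]
    linarith [(hl d).1]
  · linarith [hB (mem_coe.2 (mem_image_of_mem _ (mem_Icc.2 ⟨hd₀, hds⟩))),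
      le_max_right (θ + 2 * C + 1) (B + 1)]

theorem nonempty (hband : ∀ M R, ∃ θ δ, M ≤ θ ∧ 0 < δ ∧ IsBand x φ θ R δ)
    (hwit : ∀ δ, 0 < δ → ∀ M, ∃ l, M ≤ φ (l, i₀) ∧ x (l + δ, i₀) ≠ x (l, i₀)) (C : ℕ) :
    Nonempty (SpliceData x φ i₀ C) := by
  let Good : ℤ × ℤ × ℤ → Prop := fun s =>
    0 < s.2.1 ∧ IsBand x φ s.1 (|φ (1, 0)| * s.2.2 + 2 * C) s.2.1
  have step : ∀ s, Good s → ∃ s', Good s' ∧ s'.2.2 = s.2.2 + s.2.1 ∧ s.1 + 2 * C < s'.1 ∧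
      ∀ d, 0 ≤ d → d ≤ s.2.2 → ∃ l, s.1 ≤ φ (l, i₀) ∧ φ (l, i₀) < s'.1 ∧
        x (l + d + s.2.1, i₀) ≠ x (l + d, i₀) := by
    rintro ⟨θ, δ, s⟩ ⟨hδ, -⟩
    obtain ⟨θ', δ', hδ', hb', hθ', hw⟩ := exists_next_band hband hwit C (θ := θ) (s := s) hδ
    exact ⟨(θ', δ', s + δ), ⟨hδ', hb'⟩, rfl, hθ', hw⟩
  choose F hF using step
  obtain ⟨θ₀, δ₀, -, hδ₀, hb₀⟩ := hband 0 (2 * C)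
  let f : ℕ → {s // Good s} := fun n =>
    (fun s : {s // Good s} => ⟨F s.1 s.2, (hF s.1 s.2).1⟩)^[n]
      ⟨(θ₀, δ₀, 0), hδ₀, by simpa using hb₀⟩
  have hf : ∀ n, (f (n + 1)).1 = F (f n).1 (f n).2 := fun n => by
    simp only [f, iterate_succ_apply']
  have hs : ∀ n, (f n).1.2.2 = ∑ i ∈ range n, (f i).1.2.1 := fun n => by
    induction n with
    | zero => rfl
    | succ n ih => rw [sum_range_succ, ← ih, hf, (hF _ _).2.1]
  exact ⟨{ θ := fun n => (f n).1.1
           δ := fun n => (f n).1.2.1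
           δ_pos := fun n => (f n).2.1
           gap := fun n => by simpa only [hf] using (hF _ _).2.2.1
           band := fun n => by rw [← hs n]; exact (f n).2.2
           witness := fun n d hd₀ hd => by
             simpa only [hf] using (hF _ _).2.2.2 d hd₀ (by rw [hs n]; exact hd) }⟩

end SpliceData

/-- Splicing translates of `x` at any subset of the thresholds gives configurations of `X` with
pairwise distinct rows `i₀`: uncountably many rows. -/
theorem not_countable_PS2_of_isBand (hX : IsSFT2 X) (hx : x ∈ X) (φ : ℤ × ℤ →+ ℤ) (i₀ : ℤ)
    (hband : ∀ M R, ∃ θ δ, M ≤ θ ∧ 0 < δ ∧ IsBand x φ θ R δ)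
    (hwit : ∀ δ, 0 < δ → ∀ M, ∃ l, M ≤ φ (l, i₀) ∧ x (l + δ, i₀) ≠ x (l, i₀)) :
    ¬ (PS2 X).Countable := by
  intro hPS
  obtain ⟨D, hD⟩ := hX.exists_window
  obtain ⟨σ⟩ := SpliceData.nonempty hband hwit (D.sup fun m => (φ m).natAbs)
  have hDC : ∀ m ∈ D, |φ m| ≤ (D.sup fun m => (φ m).natAbs : ℕ) := fun m hm => by
    rw [Int.abs_eq_natAbs]
    exact_mod_cast le_sup (f := fun m => (φ m).natAbs) hm
  have := hPS.to_subtype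
  obtain ⟨f, hf⟩ := Countable.exists_injective_nat (PS2 X)
  exact cantor_injective (fun α => f ⟨row (σ.splice α) i₀,
    hX.row_mem_PS2 (σ.splice_mem hX hx hD hDC α) i₀⟩) fun α β h =>
      σ.row_splice_injective (congrArg Subtype.val (hf h))

end Splice

section Reflection

variable {S : Type*} {X : Set (ℤ × ℤ → S)}

def reflect : ℤ × ℤ ≃+ ℤ × ℤ := (AddEquiv.neg ℤ).prodCongr (AddEquiv.refl ℤ)

@[simp] theorem reflect_apply (m : ℤ × ℤ) : reflect m = (-m.1, m.2) := rfl

theorem reflect_reflect (m : ℤ × ℤ) : reflect (reflect m) = m := by simp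

theorem occurs2_comp_reflect (D : Finset (ℤ × ℤ)) (p x : ℤ × ℤ → S) :
    occurs2 D p (x ∘ reflect) ↔ occurs2 (D.image reflect) (p ∘ reflect) x := by
  simp only [occurs2, forall_mem_image, comp_apply, reflect_reflect, map_add]
  exact ⟨fun ⟨n, hn⟩ => ⟨reflect n, hn⟩, fun ⟨n, hn⟩ => ⟨reflect n, fun m hm => by
    simpa only [reflect_reflect] using hn hm⟩⟩

theorem IsSFT2.preimage_reflect (hX : IsSFT2 X) : IsSFT2 {x | x ∘ reflect ∈ X} := by
  obtain ⟨F, hF, rfl⟩ := hX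
  refine ⟨(fun P => (P.1.image reflect, P.2 ∘ reflect)) '' F, hF.image _, ?_⟩
  ext x
  show (∀ P ∈ F, _) ↔ _
  simp only [Set.forall_mem_image, occurs2_comp_reflect]
  rfl

theorem Set.Countable.PS2_preimage_reflect (hPS : (PS2 X).Countable) :
    (PS2 {x | x ∘ reflect ∈ X}).Countable := by
  refine (hPS.image fun w => w ∘ Neg.neg).mono ?_
  rintro _ ⟨x, hx, rfl⟩
  exact ⟨_, ⟨_, hx, rfl⟩, funext fun l => by simp [row]⟩

theorem Function.Periodic.comp_reflect {x : ℤ × ℤ → S} {v : ℤ × ℤ} (h : Periodic x v) :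
    Periodic (x ∘ reflect) (reflect v) := fun m => by
  simp only [comp_apply, map_add, reflect_reflect]
  exact h _

end Reflection

section SlantedPeriodCase

variable {S : Type*} {X : Set (ℤ × ℤ → S)} {x y : ℤ × ℤ → S} {v : ℤ × ℤ}

/-- Either all rows of `x` are eventually periodic to the right, and then so is `y`, or some
row is not, and the strips of `exists_isBand` can be spliced into uncountably many rows. -/
theorem exists_horizontal_period_of_occursAt_right (hX : IsSFT2 X) (hPS : (PS2 X).Countable)
    (hx : x ∈ X) (hper : Periodic x v) (hv : 0 < v.2) {c : ℤ}
    (hocc : ∀ M D, ∃ t, M ≤ t ∧ OccursAt D y x (t, c)) : ∃ P, 0 < P ∧ Periodic y (P, 0) := by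
  by_cases hrows : ∀ i, ∃ P, 0 < P ∧ ∀ᶠ t in atTop, row x i (t + P) = row x i t
  · obtain ⟨P, hP, hev⟩ := exists_eventual_period hper hv hrows
    exact ⟨P, hP, periodic_of_eventually_periodic_rows hocc hev⟩
  push Not at hrows
  obtain ⟨i₀, hi₀⟩ := hrows
  refine absurd hPS (not_countable_PS2_of_isBand hX hx (crossWith v) i₀
    (exists_isBand hper hv hocc) fun δ hδ M => ?_)
  obtain ⟨l, hl, hMl⟩ :=
    ((hi₀ δ hδ).and_eventually (eventually_ge_atTop (|M| + |i₀ * v.1|))).exists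
  have hl₀ : 0 ≤ l := by linarith [abs_nonneg M, abs_nonneg (i₀ * v.1)]
  refine ⟨l, ?_, hl⟩
  simp only [crossWith_apply]
  nlinarith [le_abs_self M, le_abs_self (i₀ * v.1),
    mul_le_mul_of_nonneg_left (show 1 ≤ v.2 by omega) hl₀]

theorem exists_horizontal_period_of_occursAt_left (hX : IsSFT2 X) (hPS : (PS2 X).Countable)
    (hx : x ∈ X) (hper : Periodic x v) (hv : 0 < v.2) {c : ℤ}
    (hocc : ∀ M D, ∃ t, t ≤ M ∧ OccursAt D y x (t, c)) : ∃ P, 0 < P ∧ Periodic y (P, 0) := by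
  have hocc' : ∀ M D, ∃ t, M ≤ t ∧ OccursAt D (y ∘ reflect) (x ∘ reflect) (t, c) := by
    intro M D
    obtain ⟨t, ht, hocc⟩ := hocc (-M) (D.image reflect)
    refine ⟨-t, by omega, fun m hm => ?_⟩
    simpa [add_comm] using hocc (reflect m) (mem_image_of_mem _ hm)
  obtain ⟨P, hP, hyP⟩ := exists_horizontal_period_of_occursAt_right
    (X := {x | x ∘ reflect ∈ X}) hX.preimage_reflect hPS.PS2_preimage_reflect
    (by simpa [comp_def, reflect_reflect] using hx) hper.comp_reflect hv hocc'
  refine ⟨P, hP, ?_⟩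
  simpa [comp_def, reflect_reflect] using hyP.comp_reflect.neg

theorem exists_horizontal_period_of_patLT2 (hX : IsSFT2 X) (hPS : (PS2 X).Countable)
    (hx : x ∈ X) (hper : Periodic x v) (hv : v.2 ≠ 0) (hyx : patLE2 y x)
    (hxy : ¬ patLE2 x y) : ∃ P, 0 < P ∧ Periodic y (P, 0) := by
  wlog hpos : 0 < v.2 generalizing v
  · exact this hper.neg (by simpa using hv) (by simp; omega)
  have hred : ∀ D, ∃ t, ∃ c ∈ Ico 0 v.2, OccursAt D y x (t, c) := fun D => by
    obtain ⟨g, hg⟩ := hyx.exists_occursAt D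
    refine ⟨g.1 - g.2 / v.2 * v.1, g.2 % v.2,
      mem_Ico.2 ⟨Int.emod_nonneg _ hv, Int.emod_lt_of_pos _ hpos⟩, ?_⟩
    convert hg.sub_zsmul hper (g.2 / v.2) using 1
    ext
    · simp
    · simp [Int.emod_def]; ring
  rcases exists_forall_or_unbounded (P := fun D t c => OccursAt D y x (t, c))
    (fun _ _ hD _ _ h => h.mono hD) _ hred with ⟨t, c, hall⟩ | ⟨c, hright | hleft⟩
  · exact absurd (patLE2_of_forall_occursAt hall) hxy
  · exact exists_horizontal_period_of_occursAt_right hX hPS hx hper hpos hright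
  · exact exists_horizontal_period_of_occursAt_left hX hPS hx hper hpos hleft

end SlantedPeriodCase

/-- In a two-dimensional SFT with the R property and countable projective
subdynamics, there is no chain of length three below a configuration with a period. -/
theorem no_two_below_periodic {S : Type} [Fintype S] (X : Set (ℤ × ℤ → S))
    (hX : IsSFT2 X) (hR : RProperty X) (hPS : (PS2 X).Countable)
    (x : ℤ × ℤ → S) (hx : x ∈ X) (n : ℤ × ℤ) (hn : n ≠ (0, 0)) (hper : shift2 n x = x) :
    ¬ ∃ y ∈ X, ∃ z ∈ X, patLT2 y x ∧ patLT2 z y := by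
  rintro ⟨y, -, z, -, ⟨hyx, hxy⟩, hzy, hyz⟩
  have hxn := periodic_of_shift2_eq hper
  have hyn := hxn.of_patLE2 hyx
  by_cases hn₂ : n.2 = 0
  · have hn₁ : n.1 ≠ 0 := fun h => hn (Prod.ext h hn₂)
    rw [show n = (n.1, 0) from Prod.ext rfl hn₂] at hxn hyn
    obtain ⟨P, hP, hyP⟩ := exists_vertical_period_of_patLT2 hX hR hx hn₁ hxn hyx hxy
    exact hyz (patLE2_of_patLE2_of_periodic hn₁ hP.ne' hyn hyP hzy)
  · obtain ⟨P, hP, hyP⟩ := exists_horizontal_period_of_patLT2 hX hPS hx hxn hn₂ hyx hxy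
    exact hyz (patLE2_of_patLE2_of_periodic hP.ne' hn₂ hyP hyn hzy)
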